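/- arXiv:2010.11748 — 2 statements merged into one kernel-verified Lean document; each statement's English description precedes it below -/
import Mathlib

section
/- For every integer K ≥ 1, every c ∈ (0, 1/2), and every probability vector η ∈ ℝ^K (η_y ≥ 0 for all y and ∑_{y=1}^K η_y = 1), the identity ∑_{y=1}^K min(c·η_y, (1−c)·(1−η_y)) = min(c, 1 − max_y η_y) holds. -/
/-!
Let `y₀` be a coordinate where `η` is maximal. Every other coordinate satisfies
`2 η_y ≤ η_y + η_{y₀} ≤ 1`, hence `η_y ≤ 1/2 ≤ 1 - c`, and there the minimum is `c η_y`; these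
terms add up to `c (1 - η_{y₀})`. Adding this to the remaining term
`min (c η_{y₀}) ((1 - c)(1 - η_{y₀}))` termwise inside the minimum gives `min c (1 - η_{y₀})`.
-/

/-- The maximum of a function on `Fin K` (for `K > 0`). -/
noncomputable def vmax {K : ℕ} (hK : 0 < K) (f : Fin K → ℝ) : ℝ :=
  Finset.univ.sup' ⟨⟨0, hK⟩, Finset.mem_univ _⟩ f

open Finset

lemma min_mul_mul_one_sub_eq_left {c t : ℝ} (h : t ≤ 1 - c) :
    min (c * t) ((1 - c) * (1 - t)) = c * t :=
  min_eq_left (by linarith)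

section ProbabilityVector

variable {ι : Type*} [Fintype ι] {η : ι → ℝ}

lemma le_half_of_le_of_ne (h0 : ∀ y, 0 ≤ η y) (h1 : ∑ y, η y = 1) {y y₀ : ι}
    (hle : η y ≤ η y₀) (hne : y ≠ y₀) : η y ≤ 1 / 2 := by
  have := add_le_sum (fun i _ ↦ h0 i) (mem_univ y) (mem_univ y₀) hne
  linarith

lemma sum_min_mul_mul_one_sub_eq {c : ℝ} (hc : c ≤ 1 / 2) (h0 : ∀ y, 0 ≤ η y)
    (h1 : ∑ y, η y = 1) {y₀ : ι} (hmax : ∀ y, η y ≤ η y₀) :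
    ∑ y, min (c * η y) ((1 - c) * (1 - η y)) = min c (1 - η y₀) := by
  classical
  have hrest : ∑ y ∈ {y₀}ᶜ, η y = 1 - η y₀ :=
    eq_sub_of_add_eq' ((Fintype.sum_eq_add_sum_compl y₀ η).symm.trans h1)
  have hsmall : ∀ y ∈ ({y₀}ᶜ : Finset ι), min (c * η y) ((1 - c) * (1 - η y)) = c * η y :=
    fun y hy ↦ min_mul_mul_one_sub_eq_left <| by
      linarith [le_half_of_le_of_ne h0 h1 (hmax y) (by simpa using hy)]
  calc ∑ y, min (c * η y) ((1 - c) * (1 - η y))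
      = min (c * η y₀) ((1 - c) * (1 - η y₀)) + ∑ y ∈ {y₀}ᶜ, c * η y := by
        rw [Fintype.sum_eq_add_sum_compl y₀, sum_congr rfl hsmall]
    _ = min (c * η y₀ + c * (1 - η y₀)) ((1 - c) * (1 - η y₀) + c * (1 - η y₀)) := by
        rw [← mul_sum, hrest, min_add_add_right]
    _ = min c (1 - η y₀) := by congr 1 <;> ring

end ProbabilityVector

/-- For every probability vector `η` in `ℝ^K` and `c ∈ (0, 1/2)`:
`∑_y min(c·η_y, (1−c)(1−η_y)) = min(c, 1 − max_y η_y)`. -/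
theorem stmt11 (K : ℕ) (hK : 1 ≤ K) (c : ℝ) (hc : c < 1/2)
    (η : Fin K → ℝ) (hη0 : ∀ y, 0 ≤ η y) (hη1 : ∑ y, η y = 1) :
    ∑ y, min (c * η y) ((1 - c) * (1 - η y)) = min c (1 - vmax (by omega) η) := by
  obtain ⟨y₀, -, hy₀⟩ := exists_mem_eq_sup' ⟨⟨0, hK⟩, mem_univ _⟩ η
  have hmax : ∀ y, η y ≤ η y₀ := fun y ↦ hy₀ ▸ le_sup' η (mem_univ y)
  rw [vmax, hy₀]
  exact sum_min_mul_mul_one_sub_eq hc.le hη0 hη1 hmax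
end

section
/- (Theorem 2, inequality (7).) Let c ∈ (0, 1/2), K ≥ 2, let X be a measurable space, P a probability measure on X × {1,…,K}, and g : X → ℝ^K a measurable score function. Then the zero-one-c regret of the induced decision rule f(·; g) is bounded by the regret of the cost-sensitive surrogate with the margin zero-one loss: R01c(f(·; g)) − R01c* ≤ R_CS^{ℓ01}(g) − R_CS^{ℓ01,*}; moreover the Bayes risks coincide: R01c* = R_CS^{ℓ01,*}. -/
open Classical MeasureTheory

/-- The discrete σ-algebra on decisions (`none` = rejection ®). -/
instance {K : ℕ} : MeasurableSpace (Option (Fin K)) := ⊤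

/-- The margin zero-one loss: `ℓ01(z) = 1` if `z ≤ 0` and `0` otherwise. -/
noncomputable def mloss01 (z : ℝ) : ℝ := if z ≤ 0 then 1 else 0

/-- The cost-sensitive surrogate loss `L_CS^φ(g, y) = c·φ(g_y) + (1−c)·∑_{y'≠y} φ(−g_{y'})`. -/
noncomputable def LCS {K : ℕ} (φ : ℝ → ℝ) (c : ℝ) (g : Fin K → ℝ) (y : Fin K) : ℝ :=
  c * φ (g y) + (1 - c) * ∑ y' ∈ Finset.univ.erase y, φ (-(g y'))

/-- The decision rule induced by a score vector `g`: reject (`none`) if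
`max_y g_y ≤ 0` or if two distinct coordinates of `g` are strictly positive,
otherwise output the unique class `y` with `g_y > 0`. -/
noncomputable def decRule {K : ℕ} (g : Fin K → ℝ) : Option (Fin K) :=
  if h : ∃! y, 0 < g y then some h.choose else none

/-- The zero-one-c loss of a decision (`none` = rejection ®) against a label `y`:
`c` for rejection, `0` for the correct class, `1` for a wrong class. -/
noncomputable def loss01c {K : ℕ} (c : ℝ) (y : Fin K) : Option (Fin K) → ℝ
  | none => c
  | some z => if z = y then 0 else 1

/-- The zero-one-c risk of a decision rule `h` under `P`:
`R01c(h) = E_{(x,y)∼P}[ℓ01c(h(x), y)]`. -/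
noncomputable def R01c {X : Type*} [MeasurableSpace X] {K : ℕ} (c : ℝ)
    (P : Measure (X × Fin K)) (h : X → Option (Fin K)) : ℝ :=
  ∫ p, loss01c c p.2 (h p.1) ∂P

/-- The Bayes zero-one-c risk: the infimum of `R01c` over measurable decision rules. -/
noncomputable def R01cStar (X : Type*) [MeasurableSpace X] (K : ℕ) (c : ℝ)
    (P : Measure (X × Fin K)) : ℝ :=
  sInf {r : ℝ | ∃ h : X → Option (Fin K), Measurable h ∧ r = R01c c P h}

/-- The cost-sensitive surrogate risk `R_CS^φ(g) = E_{(x,y)∼P}[L_CS^φ(g(x), y)]`. -/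
noncomputable def RCS {X : Type*} [MeasurableSpace X] {K : ℕ} (φ : ℝ → ℝ) (c : ℝ)
    (P : Measure (X × Fin K)) (g : X → Fin K → ℝ) : ℝ :=
  ∫ p, LCS φ c (g p.1) p.2 ∂P

/-- The infimum of the cost-sensitive surrogate risk over measurable score functions. -/
noncomputable def RCSStar (X : Type*) [MeasurableSpace X] (K : ℕ) (φ : ℝ → ℝ) (c : ℝ)
    (P : Measure (X × Fin K)) : ℝ :=
  sInf {r : ℝ | ∃ g : X → Fin K → ℝ, Measurable g ∧ r = RCS φ c P g}

/-- The one-versus-rest cost-sensitive binary `φ`-risk of class `i`: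
`R^{φ,i}_{1−c}(u) = E[c·1[y = i]·φ(u(x)) + (1−c)·1[y ≠ i]·φ(−u(x))]`. -/
noncomputable def Rbin {X : Type*} [MeasurableSpace X] {K : ℕ} (φ : ℝ → ℝ) (c : ℝ)
    (P : Measure (X × Fin K)) (i : Fin K) (u : X → ℝ) : ℝ :=
  ∫ p, (if p.2 = i then c * φ (u p.1) else (1 - c) * φ (-(u p.1))) ∂P

/-- The infimum of the one-versus-rest cost-sensitive binary `φ`-risk of class `i`
over measurable functions. -/
noncomputable def RbinStar (X : Type*) [MeasurableSpace X] (K : ℕ) (φ : ℝ → ℝ) (c : ℝ)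
    (P : Measure (X × Fin K)) (i : Fin K) : ℝ :=
  sInf {r : ℝ | ∃ u : X → ℝ, Measurable u ∧ r = Rbin φ c P i u}

/-!
Pointwise, the zero-one-c loss of the decision induced by a score vector is at most its
surrogate loss `L_CS^{ℓ01}`; the constraint `c ≤ 1/2` enters when two scores are positive,
where the decision rejects at cost `c` while the surrogate pays at least `1 - c`.
Conversely, every decision is induced by a `±1` score vector whose surrogate loss equals
its zero-one-c loss exactly, so every zero-one-c risk is also a surrogate risk. Hence the
two infima coincide, and integrating the pointwise bound gives the regret inequality.
-/

section

variable {K : ℕ}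

lemma mloss01_of_nonpos {z : ℝ} (hz : z ≤ 0) : mloss01 z = 1 := if_pos hz

lemma mloss01_of_pos {z : ℝ} (hz : 0 < z) : mloss01 z = 0 := if_neg hz.not_ge

lemma mloss01_nonneg (z : ℝ) : 0 ≤ mloss01 z := by
  unfold mloss01; split <;> norm_num

lemma abs_mloss01_le_one (z : ℝ) : |mloss01 z| ≤ 1 := by
  unfold mloss01; split <;> norm_num

lemma measurable_mloss01 : Measurable mloss01 :=
  measurable_const.ite measurableSet_Iic measurable_const

lemma decRule_eq_some_iff {v : Fin K → ℝ} {z : Fin K} :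
    decRule v = some z ↔ 0 < v z ∧ ∀ y, 0 < v y → y = z := by
  unfold decRule
  split_ifs with h
  · rw [Option.some.injEq]
    exact ⟨fun hz => hz ▸ h.choose_spec, fun hz => hz.2 _ h.choose_spec.1⟩
  · exact iff_of_false nofun fun hz => h ⟨z, hz⟩

lemma exists_ne_pos_of_decRule_eq_none {v : Fin K → ℝ} (h : decRule v = none) {y : Fin K}
    (hy : 0 < v y) : ∃ w ≠ y, 0 < v w := by
  by_contra! hw
  have hsome : decRule v = some y :=
    decRule_eq_some_iff.2 ⟨hy, fun w hw' => by_contra fun hne => (hw w hne).not_gt hw'⟩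
  exact Option.some_ne_none y (hsome.symm.trans h)

lemma measurable_decRule : Measurable (decRule (K := K)) := by
  have hsome (z : Fin K) : MeasurableSet {v : Fin K → ℝ | decRule v = some z} := by
    simp_rw [decRule_eq_some_iff]
    have hpos (y : Fin K) : Measurable fun v : Fin K → ℝ => 0 < v y :=
      (measurableSet_lt measurable_const (measurable_pi_apply y)).mem
    exact measurableSet_setOfPred.2 ((hpos z).and (.forall fun y => (hpos y).imp measurable_const))
  refine measurable_to_countable' fun d => ?_
  cases d with
  | some z => exact hsome z
  | none =>
    simp only [Set.preimage, Set.mem_singleton_iff, Option.eq_none_iff_forall_ne_some,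
      Set.ofPred_forall]
    exact .iInter fun z => (hsome z).compl

lemma one_le_sum_mloss01_neg {v : Fin K → ℝ} {y w : Fin K} (hwy : w ≠ y) (hw : 0 ≤ v w) :
    1 ≤ ∑ y' ∈ Finset.univ.erase y, mloss01 (-v y') := by
  calc (1 : ℝ) = mloss01 (-v w) := (mloss01_of_nonpos (neg_nonpos.2 hw)).symm
    _ ≤ _ := Finset.single_le_sum (f := fun y' => mloss01 (-v y'))
      (fun _ _ => mloss01_nonneg _) (Finset.mem_erase.2 ⟨hwy, Finset.mem_univ _⟩)

theorem loss01c_decRule_le_LCS {c : ℝ} (hc : c ≤ 1 / 2) (v : Fin K → ℝ) (y : Fin K) :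
    loss01c c y (decRule v) ≤ LCS mloss01 c v y := by
  set S := ∑ y' ∈ Finset.univ.erase y, mloss01 (-v y')
  have hS : 0 ≤ S := Finset.sum_nonneg fun _ _ => mloss01_nonneg _
  unfold LCS
  rcases hd : decRule v with _ | z
  · by_cases hy : 0 < v y
    · obtain ⟨w, hwy, hw⟩ := exists_ne_pos_of_decRule_eq_none hd hy
      have := one_le_sum_mloss01_neg hwy hw.le
      rw [mloss01_of_pos hy]
      simp only [loss01c]
      nlinarith
    · rw [mloss01_of_nonpos (not_lt.1 hy)]
      simp only [loss01c]
      nlinarith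
  · obtain ⟨hz, hmax⟩ := decRule_eq_some_iff.1 hd
    by_cases hzy : z = y
    · subst hzy
      rw [mloss01_of_pos hz]
      simp only [loss01c, if_true]
      nlinarith
    · have hy : v y ≤ 0 := not_lt.1 fun hy => hzy (hmax y hy).symm
      have := one_le_sum_mloss01_neg hzy hz.le
      rw [mloss01_of_nonpos hy]
      simp only [loss01c, hzy, if_false]
      nlinarith

def scoreOfDecision : Option (Fin K) → Fin K → ℝ
  | none => fun _ => -1
  | some z => fun i => if i = z then 1 else -1

lemma LCS_mloss01_scoreOfDecision (c : ℝ) (d : Option (Fin K)) (y : Fin K) :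
    LCS mloss01 c (scoreOfDecision d) y = loss01c c y d := by
  rcases d with _ | z
  · simp [LCS, scoreOfDecision, loss01c, mloss01]
  · have hneg (y' : Fin K) :
        mloss01 (-scoreOfDecision (some z) y') = if y' = z then 1 else 0 := by
      by_cases h : y' = z <;> simp [scoreOfDecision, mloss01, h]
    simp only [LCS, hneg, Finset.sum_ite_eq', Finset.mem_erase]
    by_cases hzy : z = y
    · subst hzy
      simp [scoreOfDecision, loss01c, mloss01]
    · simp [scoreOfDecision, loss01c, mloss01, hzy, Ne.symm hzy]

lemma abs_loss01c_le (c : ℝ) (y : Fin K) (d : Option (Fin K)) : |loss01c c y d| ≤ |c| + 1 := by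
  rcases d with _ | z
  · exact le_add_of_nonneg_right zero_le_one
  · simp only [loss01c]
    split_ifs <;> simp only [abs_zero, abs_one] <;> linarith [abs_nonneg c]

lemma abs_LCS_le {φ : ℝ → ℝ} (hφ : ∀ z, |φ z| ≤ 1) (c : ℝ) (v : Fin K → ℝ) (y : Fin K) :
    |LCS φ c v y| ≤ |c| + |1 - c| * K := by
  set S := ∑ y' ∈ Finset.univ.erase y, φ (-v y')
  have hS : |S| ≤ K := calc
    |S| ≤ ∑ y' ∈ Finset.univ.erase y, |φ (-v y')| := Finset.abs_sum_le_sum_abs _ _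
    _ ≤ ∑ y' ∈ Finset.univ.erase y, (1 : ℝ) := Finset.sum_le_sum fun _ _ => hφ _
    _ ≤ K := by simp
  calc |LCS φ c v y| = |c * φ (v y) + (1 - c) * S| := rfl
    _ ≤ |c * φ (v y)| + |(1 - c) * S| := abs_add_le _ _
    _ = |c| * |φ (v y)| + |1 - c| * |S| := by rw [abs_mul, abs_mul]
    _ ≤ |c| * 1 + |1 - c| * K := by gcongr; exact hφ _
    _ = |c| + |1 - c| * K := by rw [mul_one]

lemma measurable_LCS {φ : ℝ → ℝ} (hφ : Measurable φ) (c : ℝ) :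
    Measurable fun q : (Fin K → ℝ) × Fin K => LCS φ c q.1 q.2 :=
  measurable_from_prod_countable_left fun y => show Measurable fun v => LCS φ c v y from
    (by fun_prop : Measurable fun v : Fin K → ℝ => c * φ (v y)).add
      ((Finset.measurable_sum _ fun y' _ => by fun_prop).const_mul _)

section Risks

variable {X : Type*} [MeasurableSpace X] {c : ℝ} {P : Measure (X × Fin K)}

lemma integrable_loss01c [IsFiniteMeasure P] {h : X → Option (Fin K)} (hh : Measurable h) :
    Integrable (fun p => loss01c c p.2 (h p.1)) P :=
  .of_bound (measurable_from_prod_countable_left fun y =>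
      (measurable_from_top (f := loss01c c y)).comp hh).aestronglyMeasurable
    _ (ae_of_all _ fun p => abs_loss01c_le c p.2 (h p.1))

lemma integrable_LCS_mloss01 [IsFiniteMeasure P] {g : X → Fin K → ℝ} (hg : Measurable g) :
    Integrable (fun p => LCS mloss01 c (g p.1) p.2) P :=
  .of_bound ((measurable_LCS measurable_mloss01 c).comp
      ((hg.comp measurable_fst).prodMk measurable_snd)).aestronglyMeasurable
    _ (ae_of_all _ fun p => abs_LCS_le abs_mloss01_le_one c (g p.1) p.2)

lemma R01c_decRule_le_RCS [IsFiniteMeasure P] (hc : c ≤ 1 / 2) {g : X → Fin K → ℝ}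
    (hg : Measurable g) : R01c c P (fun x => decRule (g x)) ≤ RCS mloss01 c P g :=
  integral_mono (integrable_loss01c (measurable_decRule.comp hg)) (integrable_LCS_mloss01 hg)
    fun p => loss01c_decRule_le_LCS hc (g p.1) p.2

lemma RCS_scoreOfDecision (h : X → Option (Fin K)) :
    RCS mloss01 c P (fun x => scoreOfDecision (h x)) = R01c c P h :=
  integral_congr_ae (ae_of_all _ fun p => LCS_mloss01_scoreOfDecision c (h p.1) p.2)

lemma R01cStar_eq_RCSStar [IsFiniteMeasure P] (hc : c ≤ 1 / 2) :
    R01cStar X K c P = RCSStar X K mloss01 c P := by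
  refine csInf_eq_csInf_of_forall_exists_le ?_ ?_
  · rintro _ ⟨h, hh, rfl⟩
    exact ⟨_, ⟨_, (measurable_from_top (f := scoreOfDecision)).comp hh, rfl⟩,
      (RCS_scoreOfDecision h).le⟩
  · rintro _ ⟨g, hg, rfl⟩
    exact ⟨_, ⟨_, measurable_decRule.comp hg, rfl⟩, R01c_decRule_le_RCS hc hg⟩

end Risks

end

theorem stmt12_general (c : ℝ) (hc : c < 1/2) (K : ℕ)
    (X : Type*) [MeasurableSpace X] (P : Measure (X × Fin K)) [IsProbabilityMeasure P]
    (g : X → Fin K → ℝ) (hg : Measurable g) :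
    R01c c P (fun x => decRule (g x)) - R01cStar X K c P ≤
      RCS mloss01 c P g - RCSStar X K mloss01 c P ∧
    R01cStar X K c P = RCSStar X K mloss01 c P := by
  have hstar := R01cStar_eq_RCSStar (X := X) (P := P) hc.le
  refine ⟨?_, hstar⟩
  rw [hstar]
  exact sub_le_sub_right (R01c_decRule_le_RCS hc.le hg) _

/-- (Theorem 2, inequality (7).) The zero-one-c regret of the decision rule induced
by a measurable score function `g` is bounded by the regret of the cost-sensitive
surrogate with the margin zero-one loss, and the two Bayes risks coincide. -/
theorem stmt12 (c : ℝ) (hc0 : 0 < c) (hc : c < 1/2) (K : ℕ) (hK : 2 ≤ K)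
    (X : Type*) [MeasurableSpace X] (P : Measure (X × Fin K)) [IsProbabilityMeasure P]
    (g : X → Fin K → ℝ) (hg : Measurable g) :
    R01c c P (fun x => decRule (g x)) - R01cStar X K c P ≤
      RCS mloss01 c P g - RCSStar X K mloss01 c P ∧
    R01cStar X K c P = RCSStar X K mloss01 c P :=
  stmt12_general c hc K X P g hg
end
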